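/- arXiv:1109.3003 — 2 statements merged into one kernel-verified Lean document; each statement's English description precedes it below -/
import Mathlib

section
/- A ring R is a (two-sided) PF ring — i.e., R is an injective cogenerator both as a right module and as a left module over itself — if and only if the free module R^2 has orthogonal equivalence: (X^⊥)^⊥ = X for every right submodule X ≤ (R^2)_R and every left submodule X ≤ _R(R^2), where orthogonals are taken via the identification (R^2)* ≅ R^2. -/
universe u

section Perps

variable {R : Type u} [Ring R]

/-- `I^⊥` for a right submodule `I ≤ (R²)_R`, identifying `(R²)* ≅ R²` via
`x ↦ φ_x`, `φ_x(r₁,r₂) = x₁r₁ + x₂r₂`: a left submodule of `R²`. -/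
def rPerp (I : Submodule Rᵐᵒᵖ (Fin 2 → R)) : Submodule R (Fin 2 → R) where
  carrier := {x | ∀ r ∈ I, ∑ i, x i * r i = 0}
  add_mem' := by
    intro a b ha hb r hr
    simp only [Set.mem_setOf_eq, Pi.add_apply, add_mul, Finset.sum_add_distrib,
      ha r hr, hb r hr, add_zero]
  zero_mem' := by intro r hr; simp
  smul_mem' := by
    intro c x hx r hr
    simp only [Pi.smul_apply, smul_eq_mul, mul_assoc, ← Finset.mul_sum]
    rw [hx r hr, mul_zero]

/-- `X^⊥` for a left submodule `X ≤ _R(R²)` via `ψ_x(r₁,r₂) = r₁x₁ + r₂x₂`: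
a right submodule of `R²`. -/
def lPerp (X : Submodule R (Fin 2 → R)) : Submodule Rᵐᵒᵖ (Fin 2 → R) where
  carrier := {r | ∀ x ∈ X, ∑ i, x i * r i = 0}
  add_mem' := by
    intro a b ha hb x hx
    simp only [Set.mem_setOf_eq, Pi.add_apply, mul_add, Finset.sum_add_distrib,
      ha x hx, hb x hx, add_zero]
  zero_mem' := by intro x hx; simp
  smul_mem' := by
    intro c r hr x hx
    simp only [Pi.smul_apply, MulOpposite.smul_eq_mul_unop, ← mul_assoc, ← Finset.sum_mul]
    rw [hr x hx, zero_mul]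

end Perps

/-!
If `R` cogenerates `R² ⧸ X`, each vector outside `X` is separated from `X` by a functional on `R²`;
functionals on `R²` are pairings with vectors, so that vector is not in `(X^⊥)^⊥`.

Conversely, `(X^⊥)^⊥ = X` for `X = J × 0` says that every proper one-sided ideal `J` has a nonzero
annihilator on the other side. For the graph `K = {(a, g a)}` of a map `g` from an ideal to `R`,
the second coordinates of `K^⊥` form an ideal; if it were proper, a nonzero `t` annihilating it
would give `(0, t) ∈ (K^⊥)^⊥ = K`. So some `(c, -1)` lies in `K^⊥`, i.e. `g` is multiplication by
`c`, and Baer's criterion makes `R` injective on both sides. Finally, in an injective module `M`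
where every proper ideal annihilates a nonzero element, `p ≠ 0` is detected by extending
`s • p ↦ s • c` for some `c ≠ 0` annihilated by the annihilator of `p`.
-/

open MulOpposite LinearMap

section Cogenerator

variable {S M : Type u} [Ring S] [AddCommGroup M] [Module S M]

theorem exists_injective_linearMap_pi_iff {P : Type u} [AddCommGroup P] [Module S P] :
    (∃ (I : Type u) (g : P →ₗ[S] (I → M)), Function.Injective g) ↔
      ∀ p : P, p ≠ 0 → ∃ φ : P →ₗ[S] M, φ p ≠ 0 := by
  constructor
  · rintro ⟨I, g, hg⟩ p hp
    obtain ⟨i, hi⟩ := Function.ne_iff.mp ((map_ne_zero_iff g hg).mpr hp)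
    exact ⟨proj i ∘ₗ g, hi⟩
  · intro hsep
    refine ⟨P →ₗ[S] M, LinearMap.pi fun φ => φ,
      (injective_iff_map_eq_zero _).mpr fun p hp => ?_⟩
    by_contra hne
    obtain ⟨φ, hφ⟩ := hsep p hne
    exact hφ (congrFun hp φ)

theorem exists_apply_ne_zero_of_notMem {N : Type u} [AddCommGroup N] [Module S N]
    {K : Submodule S N} (hsep : ∀ p : N ⧸ K, p ≠ 0 → ∃ φ : N ⧸ K →ₗ[S] M, φ p ≠ 0)
    {x : N} (hx : x ∉ K) : ∃ φ : N →ₗ[S] M, K ≤ ker φ ∧ φ x ≠ 0 := by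
  obtain ⟨φ, hφ⟩ := hsep (K.mkQ x) (by simpa using hx)
  exact ⟨φ ∘ₗ K.mkQ, fun y hy => by simp [(Submodule.Quotient.mk_eq_zero K).mpr hy], hφ⟩

variable (S M) in
/-- For `M = S` this is the (left) Kasch condition. -/
def ProperIdealsAnnihilateNonzero : Prop :=
  ∀ I : Ideal S, I ≠ ⊤ → ∃ c : M, c ≠ 0 ∧ I ≤ ker (toSpanSingleton S M c)

theorem exists_apply_ne_zero_of_injective [Module.Injective S M]
    (hann : ProperIdealsAnnihilateNonzero S M) {P : Type u} [AddCommGroup P] [Module S P]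
    {p : P} (hp : p ≠ 0) : ∃ φ : P →ₗ[S] M, φ p ≠ 0 := by
  set τ := toSpanSingleton S P p
  obtain ⟨c, hc, hle⟩ := hann (ker τ) fun h =>
    hp (by simpa [τ] using h.ge (Submodule.mem_top (x := 1)))
  obtain ⟨φ, hφ⟩ := Module.Injective.out ((ker τ).liftQ τ le_rfl)
    (ker_eq_bot.mp (Submodule.ker_liftQ_eq_bot _ _ _ le_rfl)) ((ker τ).liftQ _ hle)
  exact ⟨φ, by simpa [τ] using (hφ (Submodule.Quotient.mk 1)).trans_ne (by simpa using hc)⟩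

end Cogenerator

section Functionals

variable {R : Type u} [Ring R] {ι : Type*} [Fintype ι] [DecidableEq ι]

theorem LinearMap.apply_eq_sum_apply_mul_op (φ : (ι → R) →ₗ[Rᵐᵒᵖ] R) (x : ι → R) :
    φ x = ∑ i, φ (fun j => if i = j then 1 else 0) * x i := by
  conv_lhs => rw [show x = ∑ i, op (x i) • fun j => if i = j then (1 : R) else 0 by ext; simp]
  simp [map_sum, smul_eq_mul_unop]

end Functionals

section Orthogonal

variable {R : Type u} [Ring R]

theorem le_lPerp_rPerp (I : Submodule Rᵐᵒᵖ (Fin 2 → R)) : I ≤ lPerp (rPerp I) :=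
  fun r hr _ hx => hx r hr

theorem le_rPerp_lPerp (X : Submodule R (Fin 2 → R)) : X ≤ rPerp (lPerp X) :=
  fun x hx _ hr => hr x hx

theorem lPerp_rPerp_eq_of_separating {I : Submodule Rᵐᵒᵖ (Fin 2 → R)}
    (hsep : ∀ p : (Fin 2 → R) ⧸ I, p ≠ 0 → ∃ φ : (Fin 2 → R) ⧸ I →ₗ[Rᵐᵒᵖ] R, φ p ≠ 0) :
    lPerp (rPerp I) = I := by
  refine le_antisymm (fun r hr => ?_) (le_lPerp_rPerp I)
  by_contra hrI
  obtain ⟨φ, hI, hφ⟩ := exists_apply_ne_zero_of_notMem hsep hrI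
  refine hφ ?_
  rw [φ.apply_eq_sum_apply_mul_op]
  exact hr _ fun x hx => (φ.apply_eq_sum_apply_mul_op x).symm.trans (hI hx)

theorem rPerp_lPerp_eq_of_separating {X : Submodule R (Fin 2 → R)}
    (hsep : ∀ p : (Fin 2 → R) ⧸ X, p ≠ 0 → ∃ φ : (Fin 2 → R) ⧸ X →ₗ[R] R, φ p ≠ 0) :
    rPerp (lPerp X) = X := by
  refine le_antisymm (fun x hx => ?_) (le_rPerp_lPerp X)
  by_contra hxX
  obtain ⟨φ, hX, hφ⟩ := exists_apply_ne_zero_of_notMem hsep hxX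
  refine hφ ?_
  rw [φ.pi_apply_eq_sum_univ]
  exact hx _ fun y hy => (φ.pi_apply_eq_sum_univ y).symm.trans (hX hy)

theorem properIdealsAnnihilateNonzero_of_rPerp_lPerp
    (h : ∀ X : Submodule R (Fin 2 → R), rPerp (lPerp X) = X) :
    ProperIdealsAnnihilateNonzero R R := by
  intro I hI
  by_contra! hann
  set e : Fin 2 → R := Pi.single 0 1
  have he : e ∈ rPerp (lPerp (Submodule.map (toSpanSingleton R _ e) I)) := by
    intro r hr
    have hr0 : r 0 = 0 := by
      by_contra h0
      exact hann (r 0) h0 fun a ha => by simpa [Fin.sum_univ_two, e] using hr _ ⟨a, ha, rfl⟩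
    simp [Fin.sum_univ_two, e, hr0]
  rw [h] at he
  obtain ⟨a, ha, hae⟩ := he
  have ha1 : a = 1 := by simpa [e] using congrFun hae 0
  exact hI ((Ideal.eq_top_iff_one _).mpr (ha1 ▸ ha))

theorem properIdealsAnnihilateNonzero_op_of_lPerp_rPerp
    (h : ∀ I : Submodule Rᵐᵒᵖ (Fin 2 → R), lPerp (rPerp I) = I) :
    ProperIdealsAnnihilateNonzero Rᵐᵒᵖ R := by
  intro I hI
  by_contra! hann
  set e : Fin 2 → R := Pi.single 0 1
  have he : e ∈ lPerp (rPerp (Submodule.map (toSpanSingleton Rᵐᵒᵖ _ e) I)) := by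
    intro x hx
    have hx0 : x 0 = 0 := by
      by_contra h0
      exact hann (x 0) h0 fun a ha => by
        simpa [Fin.sum_univ_two, e, smul_eq_mul_unop] using hx _ ⟨a, ha, rfl⟩
    simp [Fin.sum_univ_two, e, hx0]
  rw [h] at he
  obtain ⟨a, ha, hae⟩ := he
  have ha1 : a = 1 := by simpa [e, smul_eq_mul_unop] using congrFun hae 0
  exact hI ((Ideal.eq_top_iff_one _).mpr (ha1 ▸ ha))

end Orthogonal

section Baer

variable {R : Type u} [Ring R]

theorem baer_op_of_lPerp_rPerp (hann : ProperIdealsAnnihilateNonzero R R)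
    (h : ∀ I : Submodule Rᵐᵒᵖ (Fin 2 → R), lPerp (rPerp I) = I) : Module.Baer Rᵐᵒᵖ R := by
  intro I g
  set K := range (LinearMap.pi ![toSpanSingleton Rᵐᵒᵖ R 1 ∘ₗ I.subtype, g])
  obtain ⟨x, hx, hx1⟩ : (-1 : R) ∈ (rPerp K).map (proj 1) := by
    by_contra hJ
    obtain ⟨t, ht, hJt⟩ := hann ((rPerp K).map (proj 1)) fun h => hJ (h ▸ Submodule.mem_top)
    have hKt : ![0, t] ∈ lPerp (rPerp K) := fun x hx => by
      simpa [Fin.sum_univ_two] using hJt ⟨x, hx, rfl⟩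
    rw [h] at hKt
    obtain ⟨a, ha⟩ := hKt
    have ha0 : a = 0 := Subtype.ext (by simpa [smul_eq_mul_unop] using congrFun ha 0)
    exact ht (by simpa [ha0] using (congrFun ha 1).symm)
  refine ⟨toSpanSingleton Rᵐᵒᵖ R (x 0), fun a ha => ?_⟩
  have hxa : x 0 * unop a + x 1 * g ⟨a, ha⟩ = 0 := by
    simpa [Fin.sum_univ_two, smul_eq_mul_unop] using hx _ ⟨⟨a, ha⟩, rfl⟩
  rw [show x 1 = -1 from hx1, neg_one_mul, add_neg_eq_zero] at hxa
  simpa [smul_eq_mul_unop] using hxa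

theorem baer_of_rPerp_lPerp (hann : ProperIdealsAnnihilateNonzero Rᵐᵒᵖ R)
    (h : ∀ X : Submodule R (Fin 2 → R), rPerp (lPerp X) = X) : Module.Baer R R := by
  intro I g
  set X := range (LinearMap.pi ![I.subtype, g])
  set J : Ideal Rᵐᵒᵖ := ((lPerp X).map (proj 1)).comap (toSpanSingleton Rᵐᵒᵖ R 1)
  obtain ⟨r, hr, hr1⟩ : op (-1 : R) ∈ J := by
    by_contra hJ
    obtain ⟨t, ht, hJt⟩ := hann J fun h => hJ (h ▸ Submodule.mem_top)
    have hXt : ![0, t] ∈ rPerp (lPerp X) := fun r hr => by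
      simpa [Fin.sum_univ_two, smul_eq_mul_unop] using
        hJt (show op (r 1) ∈ J from ⟨r, hr, by simp [smul_eq_mul_unop]⟩)
    rw [h] at hXt
    obtain ⟨a, ha⟩ := hXt
    have ha0 : a = 0 := Subtype.ext (by simpa using congrFun ha 0)
    exact ht (by simpa [ha0] using (congrFun ha 1).symm)
  refine ⟨toSpanSingleton R R (r 0), fun a ha => ?_⟩
  have hra : a * r 0 + g ⟨a, ha⟩ * r 1 = 0 := by
    simpa [Fin.sum_univ_two] using hr _ ⟨⟨a, ha⟩, rfl⟩
  rw [show r 1 = -1 by simpa [smul_eq_mul_unop] using hr1, mul_neg_one, add_neg_eq_zero] at hra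
  simpa using hra

end Baer

/-- `R` is a two-sided PF ring (an injective cogenerator as a right module and as a left
module over itself) iff `R²` has orthogonal equivalence: `(X^⊥)^⊥ = X` for every right
submodule and every left submodule of `R²`, orthogonals taken via `(R²)* ≅ R²`. -/
theorem stmt18 {R : Type u} [Ring R] :
    (Module.Injective Rᵐᵒᵖ R ∧
      (∀ (P : Type u) [AddCommGroup P] [Module Rᵐᵒᵖ P],
        ∃ (I : Type u) (g : P →ₗ[Rᵐᵒᵖ] (I → R)), Function.Injective g) ∧
     Module.Injective R R ∧
      (∀ (P : Type u) [AddCommGroup P] [Module R P],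
        ∃ (I : Type u) (g : P →ₗ[R] (I → R)), Function.Injective g)) ↔
    ((∀ I : Submodule Rᵐᵒᵖ (Fin 2 → R), lPerp (rPerp I) = I) ∧
     (∀ X : Submodule R (Fin 2 → R), rPerp (lPerp X) = X)) := by
  constructor
  · rintro ⟨-, cogOp, -, cog⟩
    exact ⟨fun I => lPerp_rPerp_eq_of_separating (exists_injective_linearMap_pi_iff.mp (cogOp _)),
      fun X => rPerp_lPerp_eq_of_separating (exists_injective_linearMap_pi_iff.mp (cog _))⟩
  · rintro ⟨hOp, h⟩
    have annOp := properIdealsAnnihilateNonzero_op_of_lPerp_rPerp hOp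
    have ann := properIdealsAnnihilateNonzero_of_rPerp_lPerp h
    have injOp : Module.Injective Rᵐᵒᵖ R := (baer_op_of_lPerp_rPerp ann hOp).injective
    have inj : Module.Injective R R := (baer_of_rPerp_lPerp annOp h).injective
    exact ⟨injOp, fun P _ _ => exists_injective_linearMap_pi_iff.mpr
        fun _ => exists_apply_ne_zero_of_injective annOp,
      inj, fun P _ _ => exists_injective_linearMap_pi_iff.mpr
        fun _ => exists_apply_ne_zero_of_injective ann⟩
end

section
/- Let R be a (two-sided) PF ring, i.e., R is an injective cogenerator as a right and as a left module over itself. Then for every finitely generated left R-module F, the evaluation map Φ_F : F → *(F*) (where F* = left-Hom(F,R) is a right R-module and *(F*) = Hom_R(F*, R)), defined by Φ_F(m)(f) = f(m), is an isomorphism. -/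
universe u

/-- The evaluation map `Φ_F : F → *(F*)` for a left `R`-module `F`: here
`F* = Hom(_RF, R)` is a right `R`-module (an `Rᵐᵒᵖ`-module) and
`*(F*) = Hom_R(F*, R)` is a left `R`-module; `Φ_F(m)(f) = f(m)`. -/
def Phi (R : Type u) [Ring R] (F : Type u) [AddCommGroup F] [Module R F] :
    F →ₗ[R] ((F →ₗ[R] R) →ₗ[Rᵐᵒᵖ] R) where
  toFun m :=
    { toFun := fun f => f m
      map_add' := fun f g => rfl
      map_smul' := fun c f => rfl }
  map_add' m m' := by ext f; simp
  map_smul' r m := by ext f; simp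

lemma eval_free {R : Type u} [Ring R] {n : ℕ}
    (η : ((Fin n → R) →ₗ[R] R) →ₗ[Rᵐᵒᵖ] R) (g : (Fin n → R) →ₗ[R] R) :
    η g = g (fun i => η (LinearMap.proj i)) := by
  have hg : g = ∑ i : Fin n, MulOpposite.op (g (Pi.single i 1)) • LinearMap.proj i := by
    refine LinearMap.ext fun y => ?_
    rw [LinearMap.pi_apply_eq_sum_univ g y]
    simp only [LinearMap.sum_apply, LinearMap.smul_apply, LinearMap.proj_apply,
      MulOpposite.smul_eq_mul_unop, MulOpposite.unop_op, smul_eq_mul]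
    refine Finset.sum_congr rfl fun i _ => ?_
    have : (fun j => if i = j then (1:R) else 0) = Pi.single i 1 := by
      funext j; simp [Pi.single_apply, eq_comm]
    rw [this]
  conv_lhs => rw [hg]
  rw [map_sum]
  have := LinearMap.pi_apply_eq_sum_univ g (fun i => η (LinearMap.proj i))
  rw [this]
  refine Finset.sum_congr rfl fun i _ => ?_
  have : (fun j => if i = j then (1:R) else 0) = Pi.single i 1 := by
    funext j; simp [Pi.single_apply, eq_comm]
  simp [smul_eq_mul, this]

/-- If `R` is a two-sided PF ring (an injective cogenerator as a right and as a left
module over itself), then for every finitely generated left `R`-module `F` the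
evaluation map `Φ_F : F → *(F*)` is an isomorphism. -/
theorem stmt19 {R : Type u} [Ring R]
    (hinjR : Module.Injective Rᵐᵒᵖ R)
    (hcogR : ∀ (P : Type u) [AddCommGroup P] [Module Rᵐᵒᵖ P],
      ∃ (I : Type u) (g : P →ₗ[Rᵐᵒᵖ] (I → R)), Function.Injective g)
    (hinjL : Module.Injective R R)
    (hcogL : ∀ (P : Type u) [AddCommGroup P] [Module R P],
      ∃ (I : Type u) (g : P →ₗ[R] (I → R)), Function.Injective g)
    (F : Type u) [AddCommGroup F] [Module R F] [Module.Finite R F] :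
    Function.Bijective (Phi R F) := by
  constructor
  · -- injectivity from cogenerator property
    rw [← LinearMap.ker_eq_bot, LinearMap.ker_eq_bot']
    intro m hm
    obtain ⟨I, g, hg⟩ := hcogL F
    have : g m = 0 := by
      ext i
      have := LinearMap.congr_fun hm ((LinearMap.proj i).comp g)
      simpa [Phi] using this
    have := hg (by rw [this, map_zero] : g m = g 0)
    exact this
  · -- surjectivity
    intro ξ
    obtain ⟨n, π, hπ⟩ := Module.Finite.exists_fin' R F
    -- dual of π
    let πd : (F →ₗ[R] R) →ₗ[Rᵐᵒᵖ] ((Fin n → R) →ₗ[R] R) :=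
      { toFun := fun f => f.comp π
        map_add' := fun f g => by ext y; simp
        map_smul' := fun c f => by ext y; simp }
    have hπd : Function.Injective πd := by
      intro f g h
      ext m
      obtain ⟨y, rfl⟩ := hπ m
      exact congrFun (congrArg (fun (h : (Fin n → R) →ₗ[R] R) => (h : (Fin n → R) → R)) h) y
    obtain ⟨η, hη⟩ := hinjR.out πd hπd ξ
    refine ⟨π (fun i => η (LinearMap.proj i)), ?_⟩
    ext f
    have h1 : ξ f = η (f.comp π) := (hη f).symm
    have h2 : η (f.comp π) = (f.comp π) (fun i => η (LinearMap.proj i)) :=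
      eval_free η (f.comp π)
    simp only [Phi, LinearMap.coe_mk, AddHom.coe_mk]
    rw [h1, h2]
    rfl
end
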